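/- arXiv:2510.17294 — 3 statements merged into one kernel-verified Lean document; each statement's English description precedes it below -/
import Mathlib

section
/- Suppose m > 0 and Requirement 1 holds. Then for every integer k ≥ 1, the unique minimizer x_k* of J_k over ℝⁿ lies in the feasible set: g(x_k*) ≤ 1. -/
open Matrix Filter

noncomputable def fObj {n : ℕ} (Q : Matrix (Fin n) (Fin n) ℝ) (q : Fin n → ℝ) (x : Fin n → ℝ) : ℝ :=
  (1 / 2) * (x ⬝ᵥ Q.mulVec x) + q ⬝ᵥ x

noncomputable def gCon {n : ℕ} (A : Matrix (Fin n) (Fin n) ℝ) (v : Fin n → ℝ) (x : Fin n → ℝ) : ℝ :=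
  (x - v) ⬝ᵥ A.mulVec (x - v)

noncomputable def pPen {n : ℕ} (A : Matrix (Fin n) (Fin n) ℝ) (v : Fin n → ℝ) (m : ℝ) (k : ℕ)
    (x : Fin n → ℝ) : ℝ :=
  (m / (k : ℝ)) * (gCon A v x) ^ k

noncomputable def Jaux {n : ℕ} (Q : Matrix (Fin n) (Fin n) ℝ) (q : Fin n → ℝ)
    (A : Matrix (Fin n) (Fin n) ℝ) (v : Fin n → ℝ) (m : ℝ) (k : ℕ) (x : Fin n → ℝ) : ℝ :=
  fObj Q q x + pPen A v m k x

noncomputable def gradF {n : ℕ} (Q : Matrix (Fin n) (Fin n) ℝ) (q : Fin n → ℝ)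
    (x : Fin n → ℝ) : Fin n → ℝ :=
  Q.mulVec x + q

noncomputable def gradG {n : ℕ} (A : Matrix (Fin n) (Fin n) ℝ) (v : Fin n → ℝ)
    (x : Fin n → ℝ) : Fin n → ℝ :=
  (2 : ℝ) • A.mulVec (x - v)

noncomputable def gradJ {n : ℕ} (Q : Matrix (Fin n) (Fin n) ℝ) (q : Fin n → ℝ)
    (A : Matrix (Fin n) (Fin n) ℝ) (v : Fin n → ℝ) (m : ℝ) (k : ℕ) (x : Fin n → ℝ) : Fin n → ℝ :=
  gradF Q q x + (m * (gCon A v x) ^ (k - 1)) • gradG A v x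

noncomputable def lambdaMax {n : ℕ} (M : Matrix (Fin n) (Fin n) ℝ) : ℝ :=
  sSup {μ : ℝ | Module.End.HasEigenvalue (Matrix.toLin' M) μ}

noncomputable def lambdaMin {n : ℕ} (M : Matrix (Fin n) (Fin n) ℝ) : ℝ :=
  sInf {μ : ℝ | Module.End.HasEigenvalue (Matrix.toLin' M) μ}

noncomputable def enorm {n : ℕ} (w : Fin n → ℝ) : ℝ := Real.sqrt (w ⬝ᵥ w)

def Req1 {n : ℕ} (Q : Matrix (Fin n) (Fin n) ℝ) (q : Fin n → ℝ)
    (A : Matrix (Fin n) (Fin n) ℝ) (v : Fin n → ℝ) (m : ℝ) : Prop :=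
  ∀ x : Fin n → ℝ, gCon A v x = 1 →
    0 ≤ gradG A v x ⬝ᵥ (gradF Q q x + m • gradG A v x)

noncomputable def Lsmooth {n : ℕ} (Q A : Matrix (Fin n) (Fin n) ℝ) (m : ℝ) (k : ℕ) : ℝ :=
  lambdaMax (Q + (m * (4 * (k : ℝ) - 2)) • A)

def Req2 {n : ℕ} (Q : Matrix (Fin n) (Fin n) ℝ) (q : Fin n → ℝ)
    (A : Matrix (Fin n) (Fin n) ℝ) (v : Fin n → ℝ) (m : ℝ) : Prop :=
  ∀ x : Fin n → ℝ, gCon A v x = 1 →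
    ((gradF Q q x + m • gradG A v x) ⬝ᵥ (gradF Q q x + m • gradG A v x)) * _root_.enorm (gradG A v x) ≤
      2 * (Real.sqrt (lambdaMin A) / lambdaMax A) * Lsmooth Q A m 1 *
        ((gradF Q q x + m • gradG A v x) ⬝ᵥ gradG A v x)

/-!
Suppose `c := g(x*) > 1` and put `u := x* - v`, `p := m c^(k-1) ≥ m`. Stationarity of `J_k`
gives `∇f(x*) = -p ∇g(x*)`, and with it Requirement 1 at a boundary point `v + z` says that the
linear form `z ↦ ⟪z, A (Q + 2p A) u⟫` is dominated by the quadratic form `z ↦ ⟪A z, (Q + 2m A) z⟫`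
on the ellipsoid `⟪z, A z⟫ = 1`. Testing at `±u / √c` makes the quadratic form vanish at `u`;
testing near `u`, in directions `A`-orthogonal to `u`, then makes the linear form vanish. This is
impossible, since `A (Q + 2p A)` is invertible and `u ≠ 0`.
-/

theorem Matrix.IsSymm.dotProduct_mulVec_comm {ι R : Type*} [Fintype ι] [CommSemiring R]
    {A : Matrix ι ι R} (hA : A.IsSymm) (x y : ι → R) :
    x ⬝ᵥ A *ᵥ y = y ⬝ᵥ A *ᵥ x := by
  simpa only [hA.eq] using dotProduct_transpose_mulVec A x y

section QuadraticForms

variable {ι : Type*} [Fintype ι]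

theorem dotProduct_mulVec_mul_add_smul_le {Q A : Matrix ι ι ℝ} (hA : A.IsSymm) {a b : ℝ}
    (hab : a ≤ b) (u : ι → ℝ) :
    u ⬝ᵥ (A * (Q + a • A)) *ᵥ u ≤ u ⬝ᵥ (A * (Q + b • A)) *ᵥ u := by
  have hAu : 0 ≤ (A *ᵥ u) ⬝ᵥ (A *ᵥ u) := by simpa using dotProduct_star_self_nonneg (A *ᵥ u)
  simp only [← mulVec_mulVec, add_mulVec, smul_mulVec, dotProduct_add, dotProduct_smul,
    smul_eq_mul, hA.dotProduct_mulVec_comm u, dotProduct_comm _ (A *ᵥ u)]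
  nlinarith

variable {A N : Matrix ι ι ℝ} {u w : ι → ℝ}

theorem sqrt_mul_dotProduct_le_of_forall_eq_one (hA : A.PosDef)
    (h : ∀ z, z ⬝ᵥ A *ᵥ z = 1 → z ⬝ᵥ w ≤ z ⬝ᵥ N *ᵥ z) (z : ι → ℝ) :
    √(z ⬝ᵥ A *ᵥ z) * (z ⬝ᵥ w) ≤ z ⬝ᵥ N *ᵥ z := by
  rcases eq_or_ne z 0 with rfl | hz
  · simp
  have hpos : 0 < z ⬝ᵥ A *ᵥ z := by simpa using hA.dotProduct_mulVec_pos hz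
  set ρ := √(z ⬝ᵥ A *ᵥ z)
  have hρ : 0 < ρ := Real.sqrt_pos.mpr hpos
  have hρsq : ρ ^ 2 = z ⬝ᵥ A *ᵥ z := Real.sq_sqrt hpos.le
  have hunit := h (ρ⁻¹ • z) (by
    simp only [mulVec_smul, dotProduct_smul, smul_dotProduct, smul_eq_mul, ← hρsq]
    field_simp)
  simp only [mulVec_smul, dotProduct_smul, smul_dotProduct, smul_eq_mul] at hunit
  calc ρ * (z ⬝ᵥ w) = ρ ^ 2 * (ρ⁻¹ * (z ⬝ᵥ w)) := by field_simp
    _ ≤ ρ ^ 2 * (ρ⁻¹ * (ρ⁻¹ * (z ⬝ᵥ N *ᵥ z))) := by gcongr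
    _ = z ⬝ᵥ N *ᵥ z := by field_simp

theorem dotProduct_mulVec_nonneg_of_sqrt_mul_le
    (hdom : ∀ z, √(z ⬝ᵥ A *ᵥ z) * (z ⬝ᵥ w) ≤ z ⬝ᵥ N *ᵥ z) (z : ι → ℝ) :
    0 ≤ z ⬝ᵥ N *ᵥ z := by
  have h := hdom (-z)
  simp only [mulVec_neg, neg_dotProduct, dotProduct_neg, neg_neg, mul_neg] at h
  linarith [hdom z]

theorem dotProduct_le_two_mul_mul_dotProduct_mulVec
    (hdom : ∀ z, √(z ⬝ᵥ A *ᵥ z) * (z ⬝ᵥ w) ≤ z ⬝ᵥ N *ᵥ z) (hA : A.PosSemidef)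
    (hu : 1 ≤ u ⬝ᵥ A *ᵥ u) (huw : u ⬝ᵥ w = 0) (huN : u ⬝ᵥ N *ᵥ u = 0) {h : ι → ℝ}
    (hh : h ⬝ᵥ A *ᵥ u = 0) {t : ℝ} (ht : 0 < t) :
    h ⬝ᵥ w ≤ 2 * t * (h ⬝ᵥ N *ᵥ h) := by
  have hN := dotProduct_mulVec_nonneg_of_sqrt_mul_le hdom
  -- `u + t • h` stays outside the unit sphere of `A`, while `N` is `O(t ^ 2)` along `u ± t • h`.
  have hexpA : (u + t • h) ⬝ᵥ A *ᵥ (u + t • h) = u ⬝ᵥ A *ᵥ u + t ^ 2 * (h ⬝ᵥ A *ᵥ h) := by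
    simp only [mulVec_add, mulVec_smul, dotProduct_add, add_dotProduct, dotProduct_smul,
      smul_dotProduct, smul_eq_mul, (isHermitian_iff_isSymm.mp hA.1).dotProduct_mulVec_comm u h,
      hh]
    ring
  have hout : 1 ≤ √((u + t • h) ⬝ᵥ A *ᵥ (u + t • h)) := by
    have hAh : 0 ≤ h ⬝ᵥ A *ᵥ h := by simpa using hA.dotProduct_mulVec_nonneg h
    rw [Real.one_le_sqrt, hexpA]
    nlinarith
  obtain ⟨ρ, hρ, hplus⟩ : ∃ ρ, 1 ≤ ρ ∧
      ρ * ((u + t • h) ⬝ᵥ w) ≤ (u + t • h) ⬝ᵥ N *ᵥ (u + t • h) :=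
    ⟨_, hout, hdom (u + t • h)⟩
  have hminus := hN (u - t • h)
  simp only [mulVec_add, mulVec_sub, mulVec_smul, dotProduct_add, add_dotProduct,
    dotProduct_sub, sub_dotProduct, dotProduct_smul, smul_dotProduct, smul_eq_mul,
    huw, huN] at hplus hminus
  by_contra! hlt
  have hpos : 0 < t * (h ⬝ᵥ w) := mul_pos ht (by nlinarith [hN h])
  have : t * (h ⬝ᵥ w) ≤ 2 * t ^ 2 * (h ⬝ᵥ N *ᵥ h) := by nlinarith
  nlinarith

theorem eq_zero_of_sqrt_mul_dotProduct_le
    (hdom : ∀ z, √(z ⬝ᵥ A *ᵥ z) * (z ⬝ᵥ w) ≤ z ⬝ᵥ N *ᵥ z) (hA : A.PosSemidef)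
    (hu : 1 < u ⬝ᵥ A *ᵥ u) (huw : u ⬝ᵥ N *ᵥ u ≤ u ⬝ᵥ w) : w = 0 := by
  have hN := dotProduct_mulVec_nonneg_of_sqrt_mul_le hdom
  have hρu : 1 < √(u ⬝ᵥ A *ᵥ u) := by rwa [Real.lt_sqrt zero_le_one, one_pow]
  have huw0 : u ⬝ᵥ w = 0 := by nlinarith [hdom u, hN u]
  have huN : u ⬝ᵥ N *ᵥ u = 0 := le_antisymm (huw0 ▸ huw) (hN u)
  have horth (h : ι → ℝ) (hh : h ⬝ᵥ A *ᵥ u = 0) : h ⬝ᵥ w ≤ 0 := by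
    have key (t : ℝ) (ht : 0 < t) : h ⬝ᵥ w ≤ 2 * t * (h ⬝ᵥ N *ᵥ h) :=
      dotProduct_le_two_mul_mul_dotProduct_mulVec hdom hA hu.le huw0 huN hh ht
    by_contra! hpos
    have hb : 0 < h ⬝ᵥ N *ᵥ h := by nlinarith [key 1 one_pos]
    have := key (h ⬝ᵥ w / (4 * (h ⬝ᵥ N *ᵥ h))) (by positivity)
    field_simp at this
    linarith
  -- a multiple of the component of `w` that is `A`-orthogonal to `u`
  have hproj := horth ((u ⬝ᵥ A *ᵥ u) • w - (w ⬝ᵥ A *ᵥ u) • u) (by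
    simp only [sub_dotProduct, smul_dotProduct, smul_eq_mul]
    ring)
  simp only [sub_dotProduct, smul_dotProduct, smul_eq_mul, huw0, mul_zero, sub_zero] at hproj
  have hww : w ⬝ᵥ w ≤ 0 := nonpos_of_mul_nonpos_right hproj (by linarith)
  exact dotProduct_self_eq_zero.mp (le_antisymm hww (by simpa using dotProduct_star_self_nonneg w))

end QuadraticForms

theorem hasDerivAt_add_mul_add_sq_mul (a b c : ℝ) :
    HasDerivAt (fun t => a + t * b + t ^ 2 * c) b 0 := by
  simpa [Pi.add_def] using (((hasDerivAt_id (0 : ℝ)).mul_const b).const_add a).add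
    ((hasDerivAt_pow 2 (0 : ℝ)).mul_const c)

section Stationarity

variable {n : ℕ} {Q A : Matrix (Fin n) (Fin n) ℝ} {q v : Fin n → ℝ}

theorem fObj_add_smul (hQ : Q.IsSymm) (x d : Fin n → ℝ) (t : ℝ) :
    fObj Q q (x + t • d) =
      fObj Q q x + t * (d ⬝ᵥ gradF Q q x) + t ^ 2 * (d ⬝ᵥ Q *ᵥ d / 2) := by
  simp only [fObj, gradF, mulVec_add, mulVec_smul, dotProduct_add, add_dotProduct,
    dotProduct_smul, smul_dotProduct, smul_eq_mul, hQ.dotProduct_mulVec_comm x d,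
    dotProduct_comm q]
  ring

theorem gCon_add_smul (hA : A.IsSymm) (x d : Fin n → ℝ) (t : ℝ) :
    gCon A v (x + t • d) =
      gCon A v x + t * (d ⬝ᵥ gradG A v x) + t ^ 2 * (d ⬝ᵥ A *ᵥ d) := by
  rw [gCon, gCon, gradG, add_sub_right_comm]
  simp only [mulVec_add, mulVec_smul, dotProduct_add, add_dotProduct, dotProduct_smul,
    smul_dotProduct, smul_eq_mul, hA.dotProduct_mulVec_comm (x - v) d]
  ring

theorem hasDerivAt_Jaux_add_smul (hQ : Q.IsSymm) (hA : A.IsSymm) (m : ℝ) {k : ℕ} (hk : k ≠ 0)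
    (x d : Fin n → ℝ) :
    HasDerivAt (fun t : ℝ => Jaux Q q A v m k (x + t • d)) (d ⬝ᵥ gradJ Q q A v m k x) 0 := by
  have hf := hasDerivAt_add_mul_add_sq_mul (fObj Q q x) (d ⬝ᵥ gradF Q q x) (d ⬝ᵥ Q *ᵥ d / 2)
  have hg := hasDerivAt_add_mul_add_sq_mul (gCon A v x) (d ⬝ᵥ gradG A v x) (d ⬝ᵥ A *ᵥ d)
  have hJ : (fun t : ℝ => Jaux Q q A v m k (x + t • d)) = fun t =>
      (fObj Q q x + t * (d ⬝ᵥ gradF Q q x) + t ^ 2 * (d ⬝ᵥ Q *ᵥ d / 2)) +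
        m / k * (gCon A v x + t * (d ⬝ᵥ gradG A v x) + t ^ 2 * (d ⬝ᵥ A *ᵥ d)) ^ k := by
    ext t
    rw [Jaux, pPen, fObj_add_smul hQ, gCon_add_smul hA]
  rw [hJ]
  refine (hf.add ((hg.pow k).const_mul (m / k))).congr_deriv ?_
  simp only [gradJ, dotProduct_add, dotProduct_smul, smul_eq_mul]
  field_simp
  ring

theorem gradJ_eq_zero_of_forall_le (hQ : Q.IsSymm) (hA : A.IsSymm) (m : ℝ) {k : ℕ}
    (hk : k ≠ 0) {x : Fin n → ℝ} (hmin : ∀ y, Jaux Q q A v m k x ≤ Jaux Q q A v m k y) :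
    gradJ Q q A v m k x = 0 := by
  have hlocal (d : Fin n → ℝ) : IsLocalMin (fun t : ℝ => Jaux Q q A v m k (x + t • d)) 0 :=
    .of_forall fun t => by simpa using hmin (x + t • d)
  have hd (d : Fin n → ℝ) : d ⬝ᵥ gradJ Q q A v m k x = 0 :=
    (hlocal d).hasDerivAt_eq_zero (hasDerivAt_Jaux_add_smul hQ hA m hk x d)
  exact dotProduct_self_eq_zero.mp (hd _)

end Stationarity

section Requirement

variable {n : ℕ} {Q A : Matrix (Fin n) (Fin n) ℝ} {q v : Fin n → ℝ} {m : ℝ}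

theorem Req1.dotProduct_mulVec_le (hreq : Req1 Q q A v m) (hA : A.IsSymm) {x : Fin n → ℝ}
    {p : ℝ} (hx : gradF Q q x + p • gradG A v x = 0) {z : Fin n → ℝ}
    (hz : z ⬝ᵥ A *ᵥ z = 1) :
    z ⬝ᵥ (A * (Q + (2 * p) • A)) *ᵥ (x - v) ≤ z ⬝ᵥ (A * (Q + (2 * m) • A)) *ᵥ z := by
  have hbd := hreq (v + z) (by rwa [gCon, add_sub_cancel_left])
  have hstat := congrArg (dotProduct (A *ᵥ z)) hx
  have hxv : Q *ᵥ (x - v) = Q *ᵥ x - Q *ᵥ v := mulVec_sub Q x v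
  simp only [← mulVec_mulVec, hA.dotProduct_mulVec_comm z, dotProduct_comm _ (A *ᵥ z)]
  simp only [gradG, gradF, add_sub_cancel_left, add_mulVec, smul_mulVec, mulVec_add, hxv,
    dotProduct_add, dotProduct_sub, dotProduct_smul, smul_dotProduct,
    smul_eq_mul, dotProduct_zero] at hbd hstat ⊢
  linarith

end Requirement

theorem auxiliary_minimizer_feasible_general {n : ℕ}
    (Q A : Matrix (Fin n) (Fin n) ℝ) (q v : Fin n → ℝ)
    (hQ : Q.PosSemidef) (hA : A.PosDef) (m : ℝ) (hm : 0 < m)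
    (hreq1 : Req1 Q q A v m) (k : ℕ) (hk : 1 ≤ k)
    (xks : Fin n → ℝ) (hmin : ∀ x : Fin n → ℝ, Jaux Q q A v m k xks ≤ Jaux Q q A v m k x) :
    gCon A v xks ≤ 1 := by
  by_contra! hout
  have hQs : Q.IsSymm := isHermitian_iff_isSymm.mp hQ.1
  have hAs : A.IsSymm := isHermitian_iff_isSymm.mp hA.1
  set p := m * gCon A v xks ^ (k - 1)
  have hmp : m ≤ p := le_mul_of_one_le_right hm.le (one_le_pow₀ hout.le)
  have hstat : gradF Q q xks + p • gradG A v xks = 0 :=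
    gradJ_eq_zero_of_forall_le hQs hAs m (by omega) hmin
  have hw : (A * (Q + (2 * p) • A)) *ᵥ (xks - v) = 0 :=
    eq_zero_of_sqrt_mul_dotProduct_le
      (sqrt_mul_dotProduct_le_of_forall_eq_one hA fun _ => hreq1.dotProduct_mulVec_le hAs hstat)
      hA.posSemidef hout (dotProduct_mulVec_mul_add_smul_le hAs (by linarith) _)
  have hu : xks - v ≠ 0 := fun h => by norm_num [gCon, h] at hout
  have hunit : IsUnit (A * (Q + (2 * p) • A)) :=
    hA.isUnit.mul (PosDef.posSemidef_add hQ (hA.smul (by linarith))).isUnit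
  exact (mulVec_injective_of_isUnit hunit).ne hu (by rw [hw, mulVec_zero])

/-- Under Requirement 1 and `m > 0`, for every `k ≥ 1` the (unique)
minimizer of `J_k` over `ℝⁿ` lies in the feasible set, i.e. `g(x_k*) ≤ 1`. -/
theorem auxiliary_minimizer_feasible {n : ℕ} (hn : 1 ≤ n)
    (Q A : Matrix (Fin n) (Fin n) ℝ) (q v : Fin n → ℝ)
    (hQ : Q.PosSemidef) (hA : A.PosDef) (m : ℝ) (hm : 0 < m)
    (hreq1 : Req1 Q q A v m) (k : ℕ) (hk : 1 ≤ k)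
    (xks : Fin n → ℝ) (hmin : ∀ x : Fin n → ℝ, Jaux Q q A v m k xks ≤ Jaux Q q A v m k x) :
    gCon A v xks ≤ 1 :=
  auxiliary_minimizer_feasible_general Q A q v hQ hA m hm hreq1 k hk xks hmin
end

section
/- For every integer k ≥ 1, every parameter m ≥ 0, every x in the feasible set C, and every direction h ∈ ℝⁿ, the Hessian of J_k at x satisfies hᵀ∇²J_k(x)h ≤ L_k‖h‖², where L_k = λ_max(Q + m(4k−2)A). In other words, J_k is L_k-smooth on C. -/
open Matrix Filter

/-- The Hessian matrix of `J_k` at `x`: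
`∇²J_k(x) = Q + m(k−1)g(x)^{k−2} ∇g(x)∇g(x)ᵀ + m g(x)^{k−1} · 2A`. -/
noncomputable def HessJ {n : ℕ} (Q A : Matrix (Fin n) (Fin n) ℝ) (v : Fin n → ℝ)
    (m : ℝ) (k : ℕ) (x : Fin n → ℝ) : Matrix (Fin n) (Fin n) ℝ :=
  Q + (m * ((k : ℝ) - 1) * gCon A v x ^ (k - 2)) • Matrix.vecMulVec (gradG A v x) (gradG A v x)
    + (m * gCon A v x ^ (k - 1)) • ((2 : ℝ) • A)

/-!
In the quadratic form `hᵀ ∇²J_k(x) h` the rank-one term is `(∇g(x)ᵀ h)² = 4 ((x - v)ᵀ A h)²`,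
which Cauchy–Schwarz for the semi-inner product `(u, w) ↦ uᵀ A w` bounds by `4 g(x) hᵀ A h`.
Since `0 ≤ g(x) ≤ 1` on `C`, all powers of `g(x)` drop out and
`hᵀ ∇²J_k(x) h ≤ hᵀ (Q + m(4k-2) A) h`, which is at most `λ_max ‖h‖²` because
`Q + m(4k-2) A` is symmetric and hence below `λ_max • 1` in the Loewner order.
-/

namespace Matrix

variable {ι : Type*} [Fintype ι]

lemma dotProduct_vecMulVec_mulVec {R : Type*} [CommSemiring R] (y u w z : ι → R) :
    y ⬝ᵥ vecMulVec u w *ᵥ z = (y ⬝ᵥ u) * (w ⬝ᵥ z) := by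
  rw [vecMulVec_mulVec, op_smul_eq_smul, dotProduct_smul, smul_eq_mul, mul_comm]

lemma IsSymm.mulVec_dotProduct {R : Type*} [CommSemiring R] {A : Matrix ι ι R} (hA : A.IsSymm)
    (u w : ι → R) : A *ᵥ u ⬝ᵥ w = u ⬝ᵥ A *ᵥ w := by
  rw [dotProduct_mulVec, ← mulVec_transpose, hA.eq]

lemma PosSemidef.dotProduct_mulVec_sq_le [DecidableEq ι] {A : Matrix ι ι ℝ} (hA : A.PosSemidef)
    (u w : ι → ℝ) : (u ⬝ᵥ A *ᵥ w) ^ 2 ≤ (u ⬝ᵥ A *ᵥ u) * (w ⬝ᵥ A *ᵥ w) := by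
  have hswap : w ⬝ᵥ A *ᵥ u = u ⬝ᵥ A *ᵥ w := by
    rw [dotProduct_comm, (isHermitian_iff_isSymm.1 hA.isHermitian).mulVec_dotProduct]
  have hcs := A.toBilin'.apply_mul_apply_le_of_forall_zero_le
    (fun x => by simpa only [toBilin'_apply', star_trivial] using hA.dotProduct_mulVec_nonneg x) u w
  rwa [toBilin'_apply', toBilin'_apply', toBilin'_apply', toBilin'_apply', hswap, ← sq] at hcs

end Matrix

lemma setOf_hasEigenvalue_toLin'_eq_spectrum {ι K : Type*} [Fintype ι] [DecidableEq ι] [Field K]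
    (M : Matrix ι ι K) : {μ : K | Module.End.HasEigenvalue (Matrix.toLin' M) μ} = spectrum K M := by
  ext μ
  rw [Set.mem_ofPred_eq, Module.End.hasEigenvalue_iff_mem_spectrum, Matrix.spectrum_toLin']

open scoped MatrixOrder in
lemma Matrix.IsHermitian.dotProduct_mulVec_le_lambdaMax_mul {n : ℕ} {M : Matrix (Fin n) (Fin n) ℝ}
    (hM : M.IsHermitian) (h : Fin n → ℝ) : h ⬝ᵥ M *ᵥ h ≤ lambdaMax M * (h ⬝ᵥ h) := by
  have hle : M ≤ algebraMap ℝ _ (lambdaMax M) := by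
    refine (le_algebraMap_iff_spectrum_le hM).2 fun μ hμ => le_csSup ?_ ?_
    all_goals rw [setOf_hasEigenvalue_toLin'_eq_spectrum]
    exacts [M.finite_spectrum.bddAbove, hμ]
  simpa only [star_trivial, Algebra.algebraMap_eq_smul_one, sub_mulVec, smul_mulVec, one_mulVec,
    dotProduct_sub, dotProduct_smul, smul_eq_mul, sub_nonneg] using
    (Matrix.le_iff.1 hle).dotProduct_mulVec_nonneg h

/-- The penalty part of `hᵀ ∇²J_k(x) h`, written with `g = g(x)`, `a = hᵀ A h` and
`d = (x - v)ᵀ A h`. -/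
lemma penalty_curvature_le {m g a d : ℝ} {k : ℕ} (hm : 0 ≤ m) (hk : 1 ≤ k) (hg : 0 ≤ g)
    (hg1 : g ≤ 1) (ha : 0 ≤ a) (hd : d ^ 2 ≤ g * a) :
    m * ((k : ℝ) - 1) * g ^ (k - 2) * (2 * d) ^ 2 + m * g ^ (k - 1) * (2 * a)
      ≤ m * (4 * (k : ℝ) - 2) * a := by
  have hk' : (0 : ℝ) ≤ k - 1 := sub_nonneg.2 (by exact_mod_cast hk)
  -- for `k = 1` the factor `k - 1` vanishes, otherwise `g ^ (k - 2) * g = g ^ (k - 1)`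
  have hpow : ((k : ℝ) - 1) * g ^ (k - 2) * g = ((k : ℝ) - 1) * g ^ (k - 1) := by
    obtain rfl | hk2 := hk.eq_or_lt
    · simp
    · rw [mul_assoc, ← pow_succ, show k - 2 + 1 = k - 1 by omega]
  have hgk : g ^ (k - 1) ≤ 1 := pow_le_one₀ hg hg1
  calc m * ((k : ℝ) - 1) * g ^ (k - 2) * (2 * d) ^ 2 + m * g ^ (k - 1) * (2 * a)
      ≤ 4 * m * (((k : ℝ) - 1) * g ^ (k - 2) * (g * a)) + 2 * m * g ^ (k - 1) * a := by
        have : 0 ≤ ((k : ℝ) - 1) * g ^ (k - 2) := by positivity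
        nlinarith [mul_le_mul_of_nonneg_left hd this]
    _ = 4 * m * ((k : ℝ) - 1) * g ^ (k - 1) * a + 2 * m * g ^ (k - 1) * a := by
        rw [← mul_assoc _ g, hpow]; ring
    _ ≤ 4 * m * ((k : ℝ) - 1) * 1 * a + 2 * m * 1 * a := by gcongr
    _ = m * (4 * (k : ℝ) - 2) * a := by ring

lemma gradG_dotProduct {n : ℕ} {A : Matrix (Fin n) (Fin n) ℝ} (hA : A.IsSymm) (v x h : Fin n → ℝ) :
    gradG A v x ⬝ᵥ h = 2 * ((x - v) ⬝ᵥ A *ᵥ h) := by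
  rw [gradG, smul_dotProduct, smul_eq_mul, hA.mulVec_dotProduct]

lemma dotProduct_HessJ_mulVec {n : ℕ} (Q A : Matrix (Fin n) (Fin n) ℝ) (v : Fin n → ℝ) (m : ℝ)
    (k : ℕ) (x h : Fin n → ℝ) :
    h ⬝ᵥ HessJ Q A v m k x *ᵥ h = h ⬝ᵥ Q *ᵥ h
      + m * ((k : ℝ) - 1) * gCon A v x ^ (k - 2) * (gradG A v x ⬝ᵥ h) ^ 2
      + m * gCon A v x ^ (k - 1) * (2 * (h ⬝ᵥ A *ᵥ h)) := by
  simp only [HessJ, add_mulVec, smul_mulVec, dotProduct_add, dotProduct_smul, smul_eq_mul,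
    dotProduct_vecMulVec_mulVec, dotProduct_comm h (gradG A v x), sq]

theorem auxiliary_cost_Lsmooth_general {n : ℕ}
    (Q A : Matrix (Fin n) (Fin n) ℝ) (v : Fin n → ℝ)
    (hQ : Q.PosSemidef) (hA : A.PosDef) (m : ℝ) (hm : 0 ≤ m) (k : ℕ) (hk : 1 ≤ k)
    (x : Fin n → ℝ) (hx : gCon A v x ≤ 1) :
    ∀ h : Fin n → ℝ, h ⬝ᵥ (HessJ Q A v m k x).mulVec h ≤ Lsmooth Q A m k * (h ⬝ᵥ h) := by
  intro h
  have hApsd := hA.posSemidef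
  have hAnonneg (y : Fin n → ℝ) : 0 ≤ y ⬝ᵥ A *ᵥ y := by
    simpa only [star_trivial] using hApsd.dotProduct_mulVec_nonneg y
  calc h ⬝ᵥ HessJ Q A v m k x *ᵥ h
      = h ⬝ᵥ Q *ᵥ h + (m * ((k : ℝ) - 1) * gCon A v x ^ (k - 2) * (2 * ((x - v) ⬝ᵥ A *ᵥ h)) ^ 2
          + m * gCon A v x ^ (k - 1) * (2 * (h ⬝ᵥ A *ᵥ h))) := by
        rw [dotProduct_HessJ_mulVec, gradG_dotProduct (isHermitian_iff_isSymm.1 hApsd.isHermitian),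
          add_assoc]
    _ ≤ h ⬝ᵥ Q *ᵥ h + m * (4 * (k : ℝ) - 2) * (h ⬝ᵥ A *ᵥ h) := by
        gcongr
        exact penalty_curvature_le hm hk (hAnonneg _) hx (hAnonneg h)
          (hApsd.dotProduct_mulVec_sq_le _ h)
    _ = h ⬝ᵥ (Q + (m * (4 * (k : ℝ) - 2)) • A) *ᵥ h := by
        rw [add_mulVec, dotProduct_add, smul_mulVec, dotProduct_smul, smul_eq_mul]
    _ ≤ Lsmooth Q A m k * (h ⬝ᵥ h) :=
        (hQ.isHermitian.add (hApsd.isHermitian.smul (IsSelfAdjoint.all _)))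
          |>.dotProduct_mulVec_le_lambdaMax_mul h

/-- For every `k ≥ 1`, `m ≥ 0`, `x ∈ C`, and direction `h`, the Hessian of
`J_k` at `x` satisfies `hᵀ ∇²J_k(x) h ≤ L_k ‖h‖²` with `L_k = λ_max(Q + m(4k−2)A)`;
i.e. `J_k` is `L_k`-smooth on `C`. -/
theorem auxiliary_cost_Lsmooth {n : ℕ} (hn : 1 ≤ n)
    (Q A : Matrix (Fin n) (Fin n) ℝ) (q v : Fin n → ℝ)
    (hQ : Q.PosSemidef) (hA : A.PosDef) (m : ℝ) (hm : 0 ≤ m) (k : ℕ) (hk : 1 ≤ k)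
    (x : Fin n → ℝ) (hx : gCon A v x ≤ 1) :
    ∀ h : Fin n → ℝ, h ⬝ᵥ (HessJ Q A v m k x).mulVec h ≤ Lsmooth Q A m k * (h ⬝ᵥ h) :=
  auxiliary_cost_Lsmooth_general Q A v hQ hA m hm k hk x hx
end

section
/- Let A be a symmetric positive definite real n×n matrix, v ∈ ℝⁿ, g(x) = (x−v)ᵀA(x−v), C = {x : g(x) ≤ 1}, and r = √(λ_min(A))/λ_max(A). For every x with g(x) = 1, the closed ball of radius r centered at x − r·A(x−v)/‖A(x−v)‖ (i.e., tangent to the ellipsoid C at x from the inside) is contained in C. -/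
/-!
Write `u = x - v`, `w = A u`, `z = y - x` and `c = r / ‖w‖`. Expanding the square, the ball
`‖z + c w‖ ≤ c ‖w‖` is `‖z‖² + 2c⟪w, z⟫ ≤ 0`, while `g(y) = 1 + 2⟪w, z⟫ + ⟪A z, z⟫` with
`⟪A z, z⟫ ≤ λ_max ‖z‖²`. So `g(y) ≤ 1` as soon as `c λ_max ≤ 1`, i.e. `√λ_min ≤ ‖w‖`; and this
follows from Cauchy–Schwarz, `1 = ⟪w, u⟫² ≤ ‖w‖² ‖u‖² ≤ ‖w‖² / λ_min`. Both Rayleigh bounds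
`λ_min ‖z‖² ≤ ⟪A z, z⟫ ≤ λ_max ‖z‖²` come from expanding `z` in an orthonormal eigenbasis of `A`.
-/

open Matrix

noncomputable def eucNorm {n : ℕ} (w : Fin n → ℝ) : ℝ := Real.sqrt (w ⬝ᵥ w)

open Module.End RealInnerProductSpace

section InnerProductSpace

variable {E : Type*} [NormedAddCommGroup E] [InnerProductSpace ℝ E] {T : E →ₗ[ℝ] E}

theorem sqrt_le_norm_apply_of_inner_apply_self_eq_one {m : ℝ}
    (hm : ∀ z, m * ‖z‖ ^ 2 ≤ ⟪T z, z⟫) {u : E} (hu : ⟪T u, u⟫ = 1) :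
    √m ≤ ‖T u‖ := by
  have hCS : 1 ≤ ‖T u‖ * ‖u‖ := hu ▸ real_inner_le_norm (T u) u
  have hmu : m * ‖u‖ ^ 2 ≤ 1 := hu ▸ hm u
  have hm_le : m ≤ ‖T u‖ ^ 2 := by
    rcases le_or_gt m 0 with hm0 | hm0
    · exact hm0.trans (sq_nonneg _)
    · nlinarith [mul_le_mul_of_nonneg_left (one_le_pow₀ (n := 2) hCS) hm0.le]
  simpa using Real.sqrt_le_sqrt hm_le

namespace LinearMap.IsSymmetric

variable (hT : T.IsSymmetric)
include hT

theorem inner_apply_self_le_one_of_norm_sub_le {M c : ℝ} (hM : ∀ z, ⟪T z, z⟫ ≤ M * ‖z‖ ^ 2)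
    (hc : 0 ≤ c) (hcM : c * M ≤ 1) {u p : E} (hu : ⟪T u, u⟫ = 1)
    (hp : ‖p - (u - c • T u)‖ ≤ c * ‖T u‖) :
    ⟪T p, p⟫ ≤ 1 := by
  set z := p - u
  have hp_eq : p = u + z := by simp [z]
  have hball : ‖z‖ ^ 2 + 2 * c * ⟪T u, z⟫ ≤ 0 := by
    have h : ‖z + c • T u‖ ^ 2 ≤ (c * ‖T u‖) ^ 2 := by
      gcongr
      simpa [z, sub_sub_eq_add_sub, add_sub_right_comm] using hp
    rw [norm_add_sq_real, real_inner_smul_right, norm_smul, Real.norm_of_nonneg hc] at h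
    nlinarith [real_inner_comm z (T u)]
  have hexpand : ⟪T p, p⟫ = 1 + 2 * ⟪T u, z⟫ + ⟪T z, z⟫ := by
    rw [hp_eq, map_add, inner_add_left, inner_add_right, inner_add_right, hu, hT z u,
      real_inner_comm z (T u)]
    ring
  rw [hexpand]
  rcases hc.eq_or_lt with rfl | hc_pos
  · have hz : z = 0 := by simpa using hball
    simp [hz]
  · nlinarith [mul_le_mul_of_nonneg_left (hM z) hc_pos.le]

theorem inner_apply_self_le_one_of_norm_sub_le_sqrt_div {m M : ℝ}
    (hm : ∀ z, m * ‖z‖ ^ 2 ≤ ⟪T z, z⟫) (hM : ∀ z, ⟪T z, z⟫ ≤ M * ‖z‖ ^ 2)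
    {u p : E} (hu : ⟪T u, u⟫ = 1) (hp : ‖p - (u - (√m / M / ‖T u‖) • T u)‖ ≤ √m / M) :
    ⟪T p, p⟫ ≤ 1 := by
  have hTu : 0 < ‖T u‖ := norm_pos_iff.2 fun h => by simp [h] at hu
  have hM_pos : 0 < M := by nlinarith [hM u, sq_nonneg ‖u‖]
  refine hT.inner_apply_self_le_one_of_norm_sub_le (c := √m / M / ‖T u‖) hM (by positivity) ?_
    hu ?_
  · rw [show √m / M / ‖T u‖ * M = √m / ‖T u‖ by field_simp, div_le_one hTu]
    exact sqrt_le_norm_apply_of_inner_apply_self_eq_one hm hu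
  · rwa [div_mul_cancel₀ _ hTu.ne']

variable [FiniteDimensional ℝ E]

theorem inner_apply_self_eq_sum_eigenvalues {n : ℕ} (hn : Module.finrank ℝ E = n) (x : E) :
    ⟪T x, x⟫ = ∑ i, hT.eigenvalues hn i * ⟪hT.eigenvectorBasis hn i, x⟫ ^ 2 := by
  rw [← (hT.eigenvectorBasis hn).sum_inner_mul_inner (T x) x]
  refine Finset.sum_congr rfl fun i _ => ?_
  rw [real_inner_comm, ← OrthonormalBasis.repr_apply_apply, eigenvectorBasis_apply_self_apply,
    OrthonormalBasis.repr_apply_apply, RCLike.ofReal_real_eq_id, id_eq]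
  ring

theorem setOf_hasEigenvalue_eq_range {n : ℕ} (hn : Module.finrank ℝ E = n) :
    {μ : ℝ | HasEigenvalue T μ} = Set.range (hT.eigenvalues hn) := by
  ext μ
  exact ⟨hT.exists_eigenvalues_eq hn, by rintro ⟨i, rfl⟩; exact hT.hasEigenvalue_eigenvalues hn i⟩

theorem inner_apply_self_le_sSup_mul (x : E) :
    ⟪T x, x⟫ ≤ sSup {μ : ℝ | HasEigenvalue T μ} * ‖x‖ ^ 2 := by
  rw [hT.inner_apply_self_eq_sum_eigenvalues rfl, hT.setOf_hasEigenvalue_eq_range rfl,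
    ← (hT.eigenvectorBasis rfl).sum_sq_inner_right x, Finset.mul_sum]
  gcongr with i
  exact le_csSup (Set.finite_range _).bddAbove ⟨i, rfl⟩

theorem sInf_mul_le_inner_apply_self (x : E) :
    sInf {μ : ℝ | HasEigenvalue T μ} * ‖x‖ ^ 2 ≤ ⟪T x, x⟫ := by
  rw [hT.inner_apply_self_eq_sum_eigenvalues rfl, hT.setOf_hasEigenvalue_eq_range rfl,
    ← (hT.eigenvectorBasis rfl).sum_sq_inner_right x, Finset.mul_sum]
  gcongr with i
  exact csInf_le (Set.finite_range _).bddBelow ⟨i, rfl⟩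

end LinearMap.IsSymmetric

end InnerProductSpace

theorem Matrix.hasEigenvalue_toLin'_iff_toEuclideanLin {𝕜 ι : Type*} [RCLike 𝕜] [Fintype ι]
    [DecidableEq ι] (A : Matrix ι ι 𝕜) {μ : 𝕜} :
    HasEigenvalue (toLin' A) μ ↔ HasEigenvalue (toEuclideanLin A) μ := by
  rw [hasEigenvalue_iff_mem_spectrum, hasEigenvalue_iff_mem_spectrum, spectrum_toLin',
    spectrum_toLpLin]

theorem Matrix.dotProduct_mulVec_self_eq_inner {ι : Type*} [Fintype ι] [DecidableEq ι]
    (A : Matrix ι ι ℝ) (z : ι → ℝ) :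
    z ⬝ᵥ A *ᵥ z = ⟪toEuclideanLin A (WithLp.toLp 2 z), WithLp.toLp 2 z⟫ := by
  rw [toLpLin_toLp, toLin'_apply, EuclideanSpace.inner_toLp_toLp, star_trivial, dotProduct_comm]

theorem eucNorm_eq_norm_toLp {n : ℕ} (w : Fin n → ℝ) : eucNorm w = ‖WithLp.toLp 2 w‖ := by
  rw [eucNorm, norm_eq_sqrt_real_inner, EuclideanSpace.inner_toLp_toLp, star_trivial]

section Eigenvalues

variable {n : ℕ} {A : Matrix (Fin n) (Fin n) ℝ} (hA : A.IsHermitian)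
include hA

theorem lambdaMin_mul_norm_sq_le_inner_toEuclideanLin (z : EuclideanSpace ℝ (Fin n)) :
    lambdaMin A * ‖z‖ ^ 2 ≤ ⟪toEuclideanLin A z, z⟫ := by
  simpa only [lambdaMin, hasEigenvalue_toLin'_iff_toEuclideanLin] using
    (isSymmetric_toEuclideanLin_iff.2 hA).sInf_mul_le_inner_apply_self z

theorem inner_toEuclideanLin_le_lambdaMax_mul_norm_sq (z : EuclideanSpace ℝ (Fin n)) :
    ⟪toEuclideanLin A z, z⟫ ≤ lambdaMax A * ‖z‖ ^ 2 := by
  simpa only [lambdaMax, hasEigenvalue_toLin'_iff_toEuclideanLin] using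
    (isSymmetric_toEuclideanLin_iff.2 hA).inner_apply_self_le_sSup_mul z

end Eigenvalues

theorem inner_tangent_ball_in_ellipsoid_general {n : ℕ}
    (A : Matrix (Fin n) (Fin n) ℝ) (hA : A.PosDef) (v x : Fin n → ℝ)
    (hx : (x - v) ⬝ᵥ A.mulVec (x - v) = 1) :
    ∀ y : Fin n → ℝ,
      eucNorm (y - (x - (Real.sqrt (lambdaMin A) / lambdaMax A / eucNorm (A.mulVec (x - v))) •
        A.mulVec (x - v))) ≤ Real.sqrt (lambdaMin A) / lambdaMax A →
      (y - v) ⬝ᵥ A.mulVec (y - v) ≤ 1 := by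
  intro y hy
  have hT := isSymmetric_toEuclideanLin_iff.2 hA.1
  rw [dotProduct_mulVec_self_eq_inner] at hx ⊢
  refine hT.inner_apply_self_le_one_of_norm_sub_le_sqrt_div
    (lambdaMin_mul_norm_sq_le_inner_toEuclideanLin hA.1)
    (inner_toEuclideanLin_le_lambdaMax_mul_norm_sq hA.1) hx ?_
  rw [eucNorm_eq_norm_toLp, eucNorm_eq_norm_toLp] at hy
  rw [toLpLin_toLp, toLin'_apply]
  simp only [WithLp.toLp_sub, WithLp.toLp_smul] at hy ⊢
  exact le_of_eq_of_le (congrArg norm (by abel)) hy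

/-- For `A` symmetric positive definite, `g(x) = (x−v)ᵀA(x−v)`,
`C = {x : g(x) ≤ 1}` and `r = √(λ_min(A))/λ_max(A)`, for every boundary point `x`
(with `g(x) = 1`) the closed ball of radius `r` centered at
`x − r·A(x−v)/‖A(x−v)‖` (tangent to the ellipsoid at `x` from the inside)
is contained in `C`. -/
theorem inner_tangent_ball_in_ellipsoid {n : ℕ} (hn : 1 ≤ n)
    (A : Matrix (Fin n) (Fin n) ℝ) (hA : A.PosDef) (v x : Fin n → ℝ)
    (hx : (x - v) ⬝ᵥ A.mulVec (x - v) = 1) :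
    ∀ y : Fin n → ℝ,
      eucNorm (y - (x - (Real.sqrt (lambdaMin A) / lambdaMax A / eucNorm (A.mulVec (x - v))) •
        A.mulVec (x - v))) ≤ Real.sqrt (lambdaMin A) / lambdaMax A →
      (y - v) ⬝ᵥ A.mulVec (y - v) ≤ 1 :=
  inner_tangent_ball_in_ellipsoid_general A hA v x hx
end
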